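/- arXiv:2601.03954 — 3 statements merged into one kernel-verified Lean document; each statement's English description precedes it below -/
import Mathlib

section
/- Let A, B, C be points in the Euclidean plane ℝ² with all three pairwise distances at most L. Then the area of the triangle ABC is at most (√3/4)·L². (The equilateral triangle maximizes area among triangles with bounded side lengths.) -/
/-- The unsigned area of a triangle in the Euclidean plane:
`½ · |det(B - A, C - A)|`. -/
noncomputable def triangleArea (A B C : EuclideanSpace ℝ (Fin 2)) : ℝ :=
  |((B - A) 0) * ((C - A) 1) - ((B - A) 1) * ((C - A) 0)| / 2

lemma aux_tri (a b d L : ℝ) (ha : 0 ≤ a) (hb : 0 ≤ b) (haL : a ≤ L^2) (hbL : b ≤ L^2)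
    (hd : a + b - 2*d ≤ L^2) : a*b - d^2 ≤ 3/4 * L^4 := by
  rcases le_or_gt (a+b) (L^2) with h | h
  · nlinarith [sq_nonneg (a-b), sq_nonneg d, sq_nonneg (L^2)]
  · have hd0 : (a+b-L^2)/2 ≤ d := by linarith
    have h2 : ((a+b-L^2)/2)^2 ≤ d^2 := by nlinarith
    nlinarith [sq_nonneg (a-b)]

lemma aux_det (x1 x2 y1 y2 L : ℝ)
    (ha : x1^2 + x2^2 ≤ L^2) (hb : y1^2 + y2^2 ≤ L^2)
    (hc : (x1-y1)^2 + (x2-y2)^2 ≤ L^2) :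
    (x1 * y2 - x2 * y1)^2 ≤ 3/4 * L^4 := by
  have hc' : (x1^2 + x2^2) + (y1^2 + y2^2) - 2*(x1*y1 + x2*y2) ≤ L^2 := by nlinarith
  have h := aux_tri (x1^2 + x2^2) (y1^2 + y2^2) (x1*y1 + x2*y2) L
    (by positivity) (by positivity) ha hb hc'
  nlinarith [h]

theorem stmt2 (A B C : EuclideanSpace ℝ (Fin 2)) (L : ℝ) (hL : 0 < L)
    (hAB : dist A B ≤ L) (hBC : dist B C ≤ L) (hAC : dist A C ≤ L) :
    triangleArea A B C ≤ Real.sqrt 3 / 4 * L ^ 2 := by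
  have key : ∀ X Y : EuclideanSpace ℝ (Fin 2), dist X Y ≤ L →
      (X 0 - Y 0)^2 + (X 1 - Y 1)^2 ≤ L^2 := by
    intro X Y h
    rw [EuclideanSpace.dist_eq, Fin.sum_univ_two] at h
    simp only [Real.dist_eq, sq_abs] at h
    have hnn : (0:ℝ) ≤ (X 0 - Y 0)^2 + (X 1 - Y 1)^2 := by positivity
    nlinarith [Real.sq_sqrt hnn, Real.sqrt_nonneg ((X 0 - Y 0)^2 + (X 1 - Y 1)^2)]
  have h1 := key B A (by rwa [dist_comm])
  have h2 := key C A (by rwa [dist_comm])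
  have h3 := key B C hBC
  have hc : ((B 0 - A 0) - (C 0 - A 0))^2 + ((B 1 - A 1) - (C 1 - A 1))^2 ≤ L^2 := by
    nlinarith [h3]
  have hdet := aux_det (B 0 - A 0) (B 1 - A 1) (C 0 - A 0) (C 1 - A 1) L h1 h2 hc
  have hsq3 : (Real.sqrt 3)^2 = 3 := Real.sq_sqrt (by norm_num)
  have hr : (Real.sqrt 3 / 2 * L^2)^2 = 3/4 * L^4 := by
    rw [mul_pow, div_pow, hsq3]; ring
  have habs : |(B 0 - A 0) * (C 1 - A 1) - (B 1 - A 1) * (C 0 - A 0)| ≤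
      Real.sqrt 3 / 2 * L^2 := by
    refine (abs_le_of_sq_le_sq' ?_ (by positivity)).2
    rw [hr, sq_abs]; exact hdet
  have e0 : ((B - A) 0) = B 0 - A 0 := rfl
  have e1 : ((B - A) 1) = B 1 - A 1 := rfl
  have e2 : ((C - A) 0) = C 0 - A 0 := rfl
  have e3 : ((C - A) 1) = C 1 - A 1 := rfl
  unfold triangleArea
  rw [e0, e1, e2, e3]
  linarith
end

section
/- Let V be a finite set, deg : V → ℕ with deg v ≥ 1 for all v, and let u, w ∈ V be two distinct elements with deg u ≥ 4 and deg w ≥ 4. Suppose ∑_{v ∈ V} (6 - deg v) = 4 (as integers). Then among the elements of V \ {u, w}, the number of v with deg v ≤ 10 is at least the number of v with deg v > 10. (In a triangulation of an annulus with exactly one vertex on each boundary circle, at least half the interior vertices not incident to loops have degree at most ten.) -/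
theorem stmt8 (V : Type*) [Fintype V] [DecidableEq V] (deg : V → ℕ)
    (hdeg : ∀ v, 1 ≤ deg v)
    (u w : V) (huw : u ≠ w) (hu : 4 ≤ deg u) (hw : 4 ≤ deg w)
    (hsum : ∑ v : V, (6 - (deg v : ℤ)) = 4) :
    (Finset.univ.filter fun v : V => v ≠ u ∧ v ≠ w ∧ deg v ≤ 10).card ≥
      (Finset.univ.filter fun v : V => v ≠ u ∧ v ≠ w ∧ 10 < deg v).card := by
  classical
  set f : V → ℤ := fun v => 6 - (deg v : ℤ) with hf
  set A := Finset.univ.filter fun v : V => v ≠ u ∧ v ≠ w ∧ deg v ≤ 10 with hA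
  set B := Finset.univ.filter fun v : V => v ≠ u ∧ v ≠ w ∧ 10 < deg v with hB
  have hAB : Disjoint A B := by
    rw [Finset.disjoint_left]
    intro v hv hv'
    simp only [hA, hB, Finset.mem_filter] at hv hv'
    omega
  have hU : ((Finset.univ.erase u).erase w) = A ∪ B := by
    ext v
    simp only [hA, hB, Finset.mem_erase, Finset.mem_union, Finset.mem_filter,
      Finset.mem_univ, true_and, and_true]
    constructor
    · rintro ⟨h1, h2⟩; by_cases h : deg v ≤ 10
      · exact Or.inl ⟨h2, h1, h⟩
      · exact Or.inr ⟨h2, h1, by omega⟩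
    · rintro (⟨h1, h2, _⟩ | ⟨h1, h2, _⟩) <;> exact ⟨h2, h1⟩
  have hw' : w ∈ Finset.univ.erase u := by
    simp [Finset.mem_erase, huw.symm]
  have hsum2 : f u + (f w + ∑ v ∈ A ∪ B, f v) = 4 := by
    rw [← hU, Finset.add_sum_erase _ f hw', Finset.add_sum_erase _ f (Finset.mem_univ u)]
    exact hsum
  rw [Finset.sum_union hAB] at hsum2
  have hSA : ∑ v ∈ A, f v ≤ 5 * A.card := by
    calc ∑ v ∈ A, f v ≤ ∑ _v ∈ A, (5 : ℤ) := by
          apply Finset.sum_le_sum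
          intro v hv
          have := hdeg v
          simp only [hf]; omega
      _ = 5 * A.card := by rw [Finset.sum_const]; ring
  have hSB : ∑ v ∈ B, f v ≤ -5 * B.card := by
    calc ∑ v ∈ B, f v ≤ ∑ v ∈ B, (-5 : ℤ) := by
          apply Finset.sum_le_sum
          intro v hv
          simp only [hB, Finset.mem_filter] at hv
          simp only [hf]; omega
      _ = -5 * B.card := by rw [Finset.sum_const]; ring
  have hfu : f u ≤ 2 := by simp only [hf]; omega
  have hfw : f w ≤ 2 := by simp only [hf]; omega
  have : (B.card : ℤ) ≤ A.card := by linarith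
  exact_mod_cast this
end

section
/- Let Z be a finite set of points in the Euclidean plane, let z ∉ Z be a new point, and let I be a closed segment in the plane. Then there are at most 4 points x ∈ Z such that Vor(x, Z ∪ {z}) ∩ I is nonempty and Vor(x, Z ∪ {z}) ∩ I ≠ Vor(x, Z) ∩ I. (Inserting one new site into a planar Voronoi diagram changes the nonempty restrictions to a fixed segment of at most four existing cells.) -/
/-- The (closed) Voronoi cell of `x` with respect to the finite set of sites `W`. -/
def voronoiCell (x : EuclideanSpace ℝ (Fin 2)) (W : Finset (EuclideanSpace ℝ (Fin 2))) :
    Set (EuclideanSpace ℝ (Fin 2)) :=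
  {y | ∀ w' ∈ W, dist y x ≤ dist y w'}

open Set AffineMap

open scoped RealInnerProductSpace

local notation "E2" => EuclideanSpace ℝ (Fin 2)

private lemma dist_sq_aux (y u : E2) : dist y u ^ 2 = ‖y‖ ^ 2 - 2 * ⟪y, u⟫ + ‖u‖ ^ 2 := by
  rw [dist_eq_norm, norm_sub_sq_real]

private lemma dist_le_iff_aux (u w y : E2) :
    dist y u ≤ dist y w ↔ ⟪y, w - u⟫ ≤ (‖w‖ ^ 2 - ‖u‖ ^ 2) / 2 := by
  rw [← pow_le_pow_iff_left₀ dist_nonneg dist_nonneg (two_ne_zero), dist_sq_aux, dist_sq_aux,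
    inner_sub_right]
  constructor <;> intro h <;> linarith

private lemma dist_lt_iff_aux (u w y : E2) :
    dist y u < dist y w ↔ ⟪y, w - u⟫ < (‖w‖ ^ 2 - ‖u‖ ^ 2) / 2 := by
  rw [← pow_lt_pow_iff_left₀ dist_nonneg dist_nonneg (two_ne_zero), dist_sq_aux, dist_sq_aux,
    inner_sub_right]
  constructor <;> intro h <;> linarith

private lemma isLinear_inner (v : E2) : IsLinearMap ℝ (fun y : E2 => (⟪y, v⟫ : ℝ)) :=
  ⟨fun a b => inner_add_left a b v, fun c a => real_inner_smul_left a v c⟩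

private lemma convex_bisector_le (u w : E2) : Convex ℝ {y : E2 | dist y u ≤ dist y w} := by
  have h : {y : E2 | dist y u ≤ dist y w}
      = {y : E2 | ⟪y, w - u⟫ ≤ (‖w‖ ^ 2 - ‖u‖ ^ 2) / 2} := by
    ext y; exact dist_le_iff_aux u w y
  rw [h]
  exact convex_halfSpace_le (isLinear_inner (w - u)) _

private lemma convex_bisector_lt (u w : E2) : Convex ℝ {y : E2 | dist y u < dist y w} := by
  have h : {y : E2 | dist y u < dist y w}
      = {y : E2 | ⟪y, w - u⟫ < (‖w‖ ^ 2 - ‖u‖ ^ 2) / 2} := by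
    ext y; exact dist_lt_iff_aux u w y
  rw [h]
  exact convex_halfSpace_lt (isLinear_inner (w - u)) _

private lemma vor_convex (x : E2) (W : Finset E2) : Convex ℝ (voronoiCell x W) := by
  have h : voronoiCell x W = ⋂ w' ∈ W, {y : E2 | dist y x ≤ dist y w'} := by
    ext y; simp [voronoiCell]
  rw [h]
  exact convex_iInter₂ fun w' _ => convex_bisector_le x w'

/-- Three distinct sites cannot all have two common points in their (mutual) Voronoi cells. -/
private lemma three_cells (W : Finset E2) {x1 x2 x3 p v : E2}
    (h1 : x1 ∈ W) (h2 : x2 ∈ W) (h3 : x3 ∈ W)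
    (h12 : x1 ≠ x2) (h13 : x1 ≠ x3) (h23 : x2 ≠ x3)
    (hpv : p ≠ v)
    (hp1 : p ∈ voronoiCell x1 W) (hp2 : p ∈ voronoiCell x2 W) (hp3 : p ∈ voronoiCell x3 W)
    (hv1 : v ∈ voronoiCell x1 W) (hv2 : v ∈ voronoiCell x2 W) (hv3 : v ∈ voronoiCell x3 W) :
    False := by
  have hd : Module.finrank ℝ E2 = 2 := finrank_euclideanSpace_fin
  have e2p : dist x2 p = dist x1 p := by
    rw [dist_comm x2 p, dist_comm x1 p]; exact le_antisymm (hp2 x1 h1) (hp1 x2 h2)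
  have e3p : dist x3 p = dist x1 p := by
    rw [dist_comm x3 p, dist_comm x1 p]; exact le_antisymm (hp3 x1 h1) (hp1 x3 h3)
  have e2v : dist x2 v = dist x1 v := by
    rw [dist_comm x2 v, dist_comm x1 v]; exact le_antisymm (hv2 x1 h1) (hv1 x2 h2)
  have e3v : dist x3 v = dist x1 v := by
    rw [dist_comm x3 v, dist_comm x1 v]; exact le_antisymm (hv3 x1 h1) (hv1 x3 h3)
  have := EuclideanGeometry.eq_of_dist_eq_of_dist_eq_of_finrank_eq_two
    (V := E2) (P := E2) hd hpv h12 rfl e2p e3p rfl e2v e3v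
  rcases this with h | h
  · exact h13 h.symm
  · exact h23 h.symm

/-- If every member of `P` is a site whose cell contains `φ t₀` and some point `φ s` with
`t₀ < s`, then `P` has at most two elements. -/
private lemma side_le_two (W : Finset E2) (φ : ℝ → E2)
    (hφ : ∀ ⦃s u t : ℝ⦄, s ≤ u → u ≤ t → φ u ∈ segment ℝ (φ s) (φ t))
    (hφinj : Function.Injective φ) (t₀ : ℝ) (P : Set E2)
    (hP : ∀ x ∈ P, x ∈ W ∧ φ t₀ ∈ voronoiCell x W ∧
      ∃ s, t₀ < s ∧ φ s ∈ voronoiCell x W) :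
    P.ncard ≤ 2 := by
  by_contra hcon
  push_neg at hcon
  have hfin : P.Finite := W.finite_toSet.subset fun x hx => (hP x hx).1
  obtain ⟨x1, hx1, x2, hx2, x3, hx3, h12, h13, h23⟩ := (Set.two_lt_ncard hfin).1 hcon
  obtain ⟨hW1, hp1, s1, hs1, hv1⟩ := hP x1 hx1
  obtain ⟨hW2, hp2, s2, hs2, hv2⟩ := hP x2 hx2
  obtain ⟨hW3, hp3, s3, hs3, hv3⟩ := hP x3 hx3
  set m := min s1 (min s2 s3) with hm
  have hm0 : t₀ < m := lt_min hs1 (lt_min hs2 hs3)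
  have hm1 : m ≤ s1 := min_le_left _ _
  have hm2 : m ≤ s2 := le_trans (min_le_right _ _) (min_le_left _ _)
  have hm3 : m ≤ s3 := le_trans (min_le_right _ _) (min_le_right _ _)
  have hv1' : φ m ∈ voronoiCell x1 W :=
    (vor_convex x1 W).segment_subset hp1 hv1 (hφ hm0.le hm1)
  have hv2' : φ m ∈ voronoiCell x2 W :=
    (vor_convex x2 W).segment_subset hp2 hv2 (hφ hm0.le hm2)
  have hv3' : φ m ∈ voronoiCell x3 W :=
    (vor_convex x3 W).segment_subset hp3 hv3 (hφ hm0.le hm3)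
  exact three_cells W hW1 hW2 hW3 h12 h13 h23 (hφinj.ne hm0.ne) hp1 hp2 hp3 hv1' hv2' hv3'

private lemma inf_aux {lo hi : ℝ} {V T : Set ℝ} (hV : IsOpen V) (hTV : T = Icc lo hi ∩ V)
    {t' : ℝ} (ht'I : t' ∈ Icc lo hi) (ht' : t' ∉ T) (hle : t' ≤ sInf T) (hne : T.Nonempty) :
    sInf T ∉ T := by
  intro hmem
  set m := sInf T with hm
  have hmIcc : m ∈ Icc lo hi := (hTV ▸ hmem).1
  have hmV : m ∈ V := (hTV ▸ hmem).2
  obtain ⟨ε, hε, hball⟩ := Metric.isOpen_iff.1 hV m hmV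
  rcases eq_or_lt_of_le hle with h | h
  · exact ht' (h ▸ hmem)
  have hlo : lo < m := lt_of_le_of_lt ht'I.1 h
  set s := max lo (m - ε / 2) with hs
  have hsm : s < m := max_lt hlo (by linarith)
  have hsV : s ∈ V := by
    apply hball
    rw [Metric.mem_ball, Real.dist_eq, abs_lt]
    constructor
    · have : m - ε / 2 ≤ s := le_max_right _ _
      linarith
    · linarith
  have hsT : s ∈ T := by
    rw [hTV]
    exact ⟨⟨le_max_left _ _, le_trans hsm.le hmIcc.2⟩, hsV⟩
  have hbdd : BddBelow T := ⟨lo, fun y hy => (hTV ▸ hy).1.1⟩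
  exact absurd (csInf_le hbdd hsT) (not_le.2 hsm)

private lemma sup_aux {lo hi : ℝ} {V T : Set ℝ} (hV : IsOpen V) (hTV : T = Icc lo hi ∩ V)
    {t' : ℝ} (ht'I : t' ∈ Icc lo hi) (ht' : t' ∉ T) (hle : sSup T ≤ t') (hne : T.Nonempty) :
    sSup T ∉ T := by
  intro hmem
  set m := sSup T with hm
  have hmIcc : m ∈ Icc lo hi := (hTV ▸ hmem).1
  have hmV : m ∈ V := (hTV ▸ hmem).2
  obtain ⟨ε, hε, hball⟩ := Metric.isOpen_iff.1 hV m hmV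
  rcases eq_or_lt_of_le hle with h | h
  · exact ht' (h ▸ hmem)
  have hhi : m < hi := lt_of_lt_of_le h ht'I.2
  set s := min hi (m + ε / 2) with hs
  have hsm : m < s := lt_min hhi (by linarith)
  have hsV : s ∈ V := by
    apply hball
    rw [Metric.mem_ball, Real.dist_eq, abs_lt]
    constructor
    · linarith
    · have : s ≤ m + ε / 2 := min_le_right _ _
      linarith
  have hsT : s ∈ T := by
    rw [hTV]
    exact ⟨⟨le_trans hmIcc.1 hsm.le, min_le_left _ _⟩, hsV⟩
  have hbdd : BddAbove T := ⟨hi, fun y hy => (hTV ▸ hy).1.2⟩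
  exact absurd (le_csSup hbdd hsT) (not_le.2 hsm)

theorem stmt15 [DecidableEq (EuclideanSpace ℝ (Fin 2))]
    (Z : Finset (EuclideanSpace ℝ (Fin 2)))
    (z : EuclideanSpace ℝ (Fin 2)) (hz : z ∉ Z)
    (a b : EuclideanSpace ℝ (Fin 2)) :
    Set.ncard {x : EuclideanSpace ℝ (Fin 2) | x ∈ Z ∧
      (voronoiCell x (insert z Z) ∩ segment ℝ a b).Nonempty ∧
      voronoiCell x (insert z Z) ∩ segment ℝ a b ≠ voronoiCell x Z ∩ segment ℝ a b}
      ≤ 4 := by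
  classical
  set A := {x : E2 | x ∈ Z ∧
      (voronoiCell x (insert z Z) ∩ segment ℝ a b).Nonempty ∧
      voronoiCell x (insert z Z) ∩ segment ℝ a b ≠ voronoiCell x Z ∩ segment ℝ a b} with hA
  -- the new cell is a subset of the old one
  have hsubset : ∀ x : E2, voronoiCell x (insert z Z) ⊆ voronoiCell x Z := by
    intro x y hy w' hw'
    exact hy w' (Finset.mem_insert_of_mem hw')
  by_cases hab : a = b
  · -- degenerate segment: no cell can change
    have hAempty : A = ∅ := by
      rw [Set.eq_empty_iff_forall_notMem]
      rintro x ⟨hxZ, ⟨y, hy⟩, hne⟩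
      rw [hab, segment_same] at hy hne
      have hya : y = b := hy.2
      subst hya
      have h1 : voronoiCell x (insert z Z) ∩ {y} = {y} :=
        Set.inter_eq_self_of_subset_right (Set.singleton_subset_iff.2 hy.1)
      have h2 : voronoiCell x Z ∩ {y} = {y} :=
        Set.inter_eq_self_of_subset_right (Set.singleton_subset_iff.2 (hsubset x hy.1))
      exact hne (h1.trans h2.symm)
    rw [hAempty, Set.ncard_empty]
    norm_num
  by_cases hAne : A.Nonempty
  swap
  · rw [Set.not_nonempty_iff_eq_empty] at hAne
    rw [hAne, Set.ncard_empty]; norm_num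
  set φ : ℝ → E2 := fun t => lineMap a b t with hφdef
  have hφinj : Function.Injective φ := lineMap_injective ℝ hab
  have hφcont : Continuous φ := lineMap_continuous
  have hIseg : segment ℝ a b = φ '' Icc (0 : ℝ) 1 := segment_eq_image_lineMap ℝ a b
  have hφ : ∀ ⦃s u t : ℝ⦄, s ≤ u → u ≤ t → φ u ∈ segment ℝ (φ s) (φ t) := by
    intro s u t hsu hut
    have h1 : u ∈ segment ℝ s t := by
      rw [segment_eq_Icc (le_trans hsu hut)]; exact ⟨hsu, hut⟩
    have h2 : φ u ∈ φ '' segment ℝ s t := ⟨u, h1, rfl⟩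
    rwa [show φ '' segment ℝ s t = segment ℝ (φ s) (φ t) from
      image_segment ℝ (lineMap a b) s t] at h2
  set U : Set ℝ := ⋂ x' ∈ Z, φ ⁻¹' {y : E2 | dist y z < dist y x'} with hU
  have hUopen : IsOpen U :=
    isOpen_biInter_finset fun x' _ =>
      ((isOpen_lt (continuous_id.dist continuous_const)
        (continuous_id.dist continuous_const)).preimage hφcont)
  have hUmem : ∀ t : ℝ, t ∈ U ↔ ∀ x' ∈ Z, dist (φ t) z < dist (φ t) x' := by
    intro t; simp [hU]
  set T : Set ℝ := Icc (0 : ℝ) 1 ∩ U with hT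
  have hTconv : Convex ℝ T := by
    apply (convex_Icc (0 : ℝ) 1).inter
    exact convex_iInter₂ fun x' _ => (convex_bisector_lt z x').affine_preimage (lineMap a b)
  have hTsub : T ⊆ Icc (0 : ℝ) 1 := fun t ht => ht.1
  -- extraction: every affected cell gives points of T and of its complement
  have hextract : ∀ x ∈ A, ∃ t t' : ℝ,
      t ∈ T ∧ φ t ∈ voronoiCell x Z ∧
      t' ∈ Icc (0 : ℝ) 1 ∧ t' ∉ T ∧ φ t' ∈ voronoiCell x Z := by
    rintro x ⟨hxZ, ⟨y', hy'⟩, hne⟩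
    -- the lost point y
    have hnsub : ¬ (voronoiCell x Z ∩ segment ℝ a b ⊆
        voronoiCell x (insert z Z) ∩ segment ℝ a b) := by
      intro h
      exact hne (le_antisymm (Set.inter_subset_inter_left _ (hsubset x)) h)
    obtain ⟨y, hy, hyn⟩ := Set.not_subset.1 hnsub
    have hyI : y ∈ segment ℝ a b := hy.2
    have hynew : y ∉ voronoiCell x (insert z Z) := fun h => hyn ⟨h, hyI⟩
    have hyz : dist y z < dist y x := by
      by_contra h
      push_neg at h
      apply hynew
      intro w' hw'
      rcases Finset.mem_insert.1 hw' with rfl | hw'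
      · exact h
      · exact hy.1 w' hw'
    obtain ⟨t, htI, hty⟩ := hIseg ▸ hyI
    obtain ⟨t', ht'I, ht'y⟩ := hIseg ▸ hy'.2
    refine ⟨t, t', ⟨htI, ?_⟩, hty ▸ hy.1, ht'I, ?_, ?_⟩
    · rw [hUmem, hty]
      intro x' hx'
      exact lt_of_lt_of_le hyz (hy.1 x' hx')
    · intro ht'T
      have := (hUmem t').1 ht'T.2 x hxZ
      rw [ht'y] at this
      exact absurd (hy'.1 z (Finset.mem_insert_self z Z)) (not_le.2 this)
    · rw [ht'y]
      exact hsubset x hy'.1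
  -- T is nonempty
  obtain ⟨x₀, hx₀⟩ := hAne
  obtain ⟨t₀', _, ht₀'T, _, _, _, _⟩ := hextract x₀ hx₀
  have hTne : T.Nonempty := ⟨t₀', ht₀'T⟩
  have hbddb : BddBelow T := ⟨0, fun y hy => hy.1.1⟩
  have hbdda : BddAbove T := ⟨1, fun y hy => hy.1.2⟩
  set tinf := sInf T with htinf
  set tsup := sSup T with htsup
  set P : Set E2 := {x : E2 | x ∈ Z ∧ φ tinf ∈ voronoiCell x Z ∧
      ∃ s, tinf < s ∧ φ s ∈ voronoiCell x Z} with hP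
  set Q : Set E2 := {x : E2 | x ∈ Z ∧ φ tsup ∈ voronoiCell x Z ∧
      ∃ s, s < tsup ∧ φ s ∈ voronoiCell x Z} with hQ
  have hAPQ : A ⊆ P ∪ Q := by
    intro x hx
    obtain ⟨t, t', htT, htV, ht'I, ht'T, ht'V⟩ := hextract x hx
    have hxZ : x ∈ Z := hx.1
    have htt' : t ≠ t' := fun h => ht'T (h ▸ htT)
    rcases lt_or_gt_of_ne htt'.symm with hlt | hgt
    · -- t' < t : x belongs to P
      left
      have ht'lt : ∀ s ∈ T, t' < s := by
        intro s hs
        by_contra hc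
        push_neg at hc
        exact ht'T (hTconv.ordConnected.out hs htT ⟨hc, hlt.le⟩)
      have ht'le : t' ≤ tinf := le_csInf hTne fun s hs => (ht'lt s hs).le
      have hinfT : tinf ∉ T := inf_aux hUopen rfl ht'I ht'T ht'le hTne
      have hinflt : tinf < t := lt_of_le_of_ne (csInf_le hbddb htT) fun h => hinfT (h ▸ htT)
      have hpmem : φ tinf ∈ voronoiCell x Z :=
        (vor_convex x Z).segment_subset ht'V htV (hφ ht'le hinflt.le)
      exact ⟨hxZ, hpmem, t, hinflt, htV⟩
    · -- t < t' : x belongs to Q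
      right
      have ht'gt : ∀ s ∈ T, s < t' := by
        intro s hs
        by_contra hc
        push_neg at hc
        exact ht'T (hTconv.ordConnected.out htT hs ⟨hgt.le, hc⟩)
      have ht'ge : tsup ≤ t' := csSup_le hTne fun s hs => (ht'gt s hs).le
      have hsupT : tsup ∉ T := sup_aux hUopen rfl ht'I ht'T ht'ge hTne
      have hsupgt : t < tsup := lt_of_le_of_ne (le_csSup hbdda htT) fun h => hsupT (h ▸ htT)
      have hqmem : φ tsup ∈ voronoiCell x Z :=
        (vor_convex x Z).segment_subset htV ht'V (hφ hsupgt.le ht'ge)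
      exact ⟨hxZ, hqmem, t, hsupgt, htV⟩
  have hPle : P.ncard ≤ 2 := side_le_two Z φ hφ hφinj tinf P fun x hx => hx
  have hQle : Q.ncard ≤ 2 := by
    set ψ : ℝ → E2 := fun u => φ (-u) with hψ
    have hψφ : ∀ ⦃s u t : ℝ⦄, s ≤ u → u ≤ t → ψ u ∈ segment ℝ (ψ s) (ψ t) := by
      intro s u t hsu hut
      have := hφ (neg_le_neg hut) (neg_le_neg hsu)
      rwa [segment_symm] at this
    have hψinj : Function.Injective ψ := hφinj.comp neg_injective
    apply side_le_two Z ψ hψφ hψinj (-tsup) Q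
    rintro x ⟨hxZ, hq, s, hslt, hsV⟩
    refine ⟨hxZ, by simpa [hψ] using hq, -s, by linarith, by simpa [hψ] using hsV⟩
  calc A.ncard ≤ (P ∪ Q).ncard :=
        Set.ncard_le_ncard hAPQ ((Z.finite_toSet.subset fun x hx => hx.1).union
          (Z.finite_toSet.subset fun x hx => hx.1))
    _ ≤ P.ncard + Q.ncard := Set.ncard_union_le P Q
    _ ≤ 4 := by omega
end
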